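/- arXiv:1512.07043 — 2 statements merged into one kernel-verified Lean document; each statement's English description precedes it below -/
import Mathlib

section
/- Let A be an n×n Metzler sign-pattern, identified with its unit sign-matrix U = sgn(A) ∈ {−1,0,1}^{n×n} with nonnegative off-diagonal entries. Then every real matrix M whose entries have the same signs as U (M_{ij} > 0 where U_{ij} = 1, M_{ij} < 0 where U_{ij} = −1, M_{ij} = 0 where U_{ij} = 0) is Hurwitz stable if and only if the single matrix U itself is Hurwitz stable. -/
open Matrix

def IsHurwitz {n : ℕ} (A : Matrix (Fin n) (Fin n) ℝ) : Prop :=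
  ∀ μ ∈ spectrum ℂ (A.map (Complex.ofReal)), μ.re < 0

/-- `M` belongs to the qualitative class of the sign pattern `U`:
its entries have exactly the signs prescribed by `U`. -/
def InQualClass {n : ℕ} (U M : Matrix (Fin n) (Fin n) ℝ) : Prop :=
  ∀ i j, (U i j = 1 → 0 < M i j) ∧ (U i j = -1 → M i j < 0) ∧ (U i j = 0 → M i j = 0)

/-!
For a Hurwitz Metzler matrix `A` and small `t > 0`, the matrix `1 + t • A` is entrywise
nonnegative and its eigenvalues `1 + t μ` lie in the open unit disc, so its powers tend to `0`.
Since `v ≤ (1 + t • A) ^ k *ᵥ v` whenever `v ≥ 0` and `A *ᵥ v ≥ 0`, no such `v` is nonzero.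
Testing indicator vectors shows that every diagonal entry of the unit pattern `U` is `-1` and
that its off-diagonal digraph has no cycle: on the set of vertices reaching a cycle, each row
contains the `-1` of the diagonal and a `1` leading back into the set. A matrix with negative
diagonal and acyclic off-diagonal digraph is triangular up to a permutation, so it is Hurwitz;
every matrix in the qualitative class of `U` is of this kind.
-/

open Filter Topology Relation
open scoped ENNReal

theorem spectralRadius_lt_of_finite {𝕜 A : Type*} [NormedField 𝕜] [Ring A] [Algebra 𝕜 A] {a : A}
    (hfin : (spectrum 𝕜 a).Finite) {r : ℝ≥0∞} (hr : 0 < r)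
    (h : ∀ μ ∈ spectrum 𝕜 a, (‖μ‖₊ : ℝ≥0∞) < r) : spectralRadius 𝕜 a < r := by
  rw [spectralRadius, ← hfin.coe_toFinset]
  simp_rw [Finset.mem_coe, ← Finset.sup_eq_iSup]
  exact (Finset.sup_lt_iff hr).2 fun μ hμ => h μ (hfin.mem_toFinset.1 hμ)

theorem tendsto_pow_atTop_nhds_zero_of_spectralRadius_lt_one {A : Type*} [NormedRing A]
    [NormedAlgebra ℂ A] [CompleteSpace A] {a : A} (h : spectralRadius ℂ a < 1) :
    Tendsto (a ^ ·) atTop (𝓝 0) := by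
  obtain ⟨r, hρr, hr1⟩ := ENNReal.lt_iff_exists_nnreal_btwn.mp h
  have hbound : ∀ᶠ k : ℕ in atTop, ‖a ^ k‖ ≤ (r : ℝ) ^ k := by
    filter_upwards [(spectrum.pow_norm_pow_one_div_tendsto_nhds_spectralRadius
      a).eventually_lt_const hρr, eventually_gt_atTop 0] with k hk hk0
    rw [ENNReal.ofReal_lt_iff_lt_toReal (by positivity) ENNReal.coe_ne_top, ENNReal.coe_toReal,
      one_div] at hk
    have := (Real.rpow_inv_lt_iff_of_pos (norm_nonneg (a ^ k)) r.2 (Nat.cast_pos.mpr hk0)).mp hk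
    exact_mod_cast this.le
  exact squeeze_zero_norm' hbound (tendsto_pow_atTop_nhds_zero_of_lt_one r.2 (mod_cast hr1))

theorem spectrum_one_add_unit_smul {𝕜 A : Type*} [CommRing 𝕜] [Ring A] [Algebra 𝕜 A] (a : A)
    (t : 𝕜ˣ) : spectrum 𝕜 (1 + t • a) = (fun μ => 1 + (t : 𝕜) * μ) '' spectrum 𝕜 a := by
  rw [← map_one (algebraMap 𝕜 A), ← spectrum.singleton_add_eq, spectrum.unit_smul_eq_smul]
  ext
  simp [Set.mem_smul_set, Units.smul_def, eq_neg_add_iff_add_eq]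

theorem eventually_norm_one_add_mul_lt_one {μ : ℂ} (hμ : μ.re < 0) :
    ∀ᶠ t : ℝ in 𝓝[>] 0, ‖1 + (t : ℂ) * μ‖ < 1 := by
  have hsmall : ∀ᶠ t in 𝓝 (0 : ℝ), t * ‖μ‖ ^ 2 < -2 * μ.re := by
    refine (Continuous.tendsto (by fun_prop) 0).eventually_lt_const ?_
    simp only [zero_mul]; linarith
  filter_upwards [nhdsWithin_le_nhds hsmall, self_mem_nhdsWithin] with t ht (htpos : 0 < t)
  have hsq : ‖1 + (t : ℂ) * μ‖ ^ 2 = 1 + t * (2 * μ.re + t * ‖μ‖ ^ 2) := by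
    rw [Complex.sq_norm, Complex.sq_norm, Complex.normSq_apply, Complex.normSq_apply]
    simp only [Complex.add_re, Complex.one_re, Complex.mul_re, Complex.ofReal_re,
      Complex.ofReal_im, Complex.add_im, Complex.one_im, Complex.mul_im]
    ring
  have : ‖1 + (t : ℂ) * μ‖ ^ 2 < 1 ^ 2 := by rw [hsq]; nlinarith
  exact (pow_lt_pow_iff_left₀ (norm_nonneg _) zero_le_one two_ne_zero).1 this

namespace Matrix

variable {ι : Type*} [Fintype ι] [DecidableEq ι]

theorem tendsto_pow_of_forall_norm_lt_one {B : Matrix ι ι ℝ}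
    (h : ∀ μ ∈ spectrum ℂ (B.map Complex.ofReal), ‖μ‖ < 1) :
    Tendsto (B ^ ·) atTop (𝓝 0) := by
  let := Matrix.linftyOpNormedRing (n := ι) (α := ℂ)
  let := Matrix.linftyOpNormedAlgebra (n := ι) (R := ℂ) (α := ℂ)
  have hρ : spectralRadius ℂ (B.map Complex.ofReal) < 1 :=
    spectralRadius_lt_of_finite (finite_spectrum _) one_pos fun μ hμ => mod_cast h μ hμ
  have hre := ((continuous_id.matrix_map Complex.continuous_re).tendsto 0).comp
    (tendsto_pow_atTop_nhds_zero_of_spectralRadius_lt_one hρ)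
  convert hre using 2 with k
  · have hpow : B.map Complex.ofReal ^ k = (B ^ k).map Complex.ofReal :=
      (map_pow Complex.ofRealHom.mapMatrix B k).symm
    ext i j
    simp [hpow]
  · ext i j
    simp

def IsMetzler (A : Matrix ι ι ℝ) : Prop :=
  ∀ i j, i ≠ j → 0 ≤ A i j

def offDiagAdj {R : Type*} [Zero R] (M : Matrix ι ι R) (i j : ι) : Prop :=
  i ≠ j ∧ M i j ≠ 0

theorem le_pow_mulVec {B : Matrix ι ι ℝ} (hB : ∀ i j, 0 ≤ B i j) {v : ι → ℝ}
    (hv : v ≤ B *ᵥ v) (k : ℕ) : v ≤ B ^ k *ᵥ v := by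
  induction k with
  | zero => simp
  | succ k ih =>
    calc v ≤ B *ᵥ v := hv
      _ ≤ B *ᵥ (B ^ k *ᵥ v) := fun i => dotProduct_le_dotProduct_of_nonneg_left ih (hB i)
      _ = B ^ (k + 1) *ᵥ v := by rw [pow_succ', mulVec_mulVec]

theorem exists_diag_eq_of_mem_spectrum {K : Type*} [Field K] {M : Matrix ι ι K}
    (hacyc : ∀ i, ¬TransGen M.offDiagAdj i i) {μ : K} (hμ : μ ∈ spectrum K M) :
    ∃ i, M i i = μ := by
  by_contra! hdiag
  have hwf : WellFounded (flip (TransGen M.offDiagAdj)) :=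
    @Finite.wellFounded_of_trans_of_irrefl _ _ _ ⟨fun _ _ _ h₁ h₂ => h₂.trans h₁⟩ ⟨hacyc⟩
  refine hμ ?_
  rw [spectrum.mem_resolventSet_iff, isUnit_iff_isUnit_det, isUnit_iff_ne_zero]
  intro hdet
  obtain ⟨x, hx0, hx⟩ := exists_mulVec_eq_zero_iff.mpr hdet
  refine hx0 (funext fun i => hwf.induction (C := fun j => x j = 0) i fun i ih => ?_)
  have hMx : (M *ᵥ x) i = M i i * x i := by
    refine Finset.sum_eq_single i (fun j _ hji => ?_) (by simp)
    by_cases hMij : M i j = 0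
    · simp [hMij]
    · simp [ih j (TransGen.single ⟨hji.symm, hMij⟩)]
  have hrow : (μ - M i i) * x i = 0 := by
    have := congrFun hx i
    rw [sub_mulVec, Algebra.algebraMap_eq_smul_one, smul_mulVec, one_mulVec, Pi.sub_apply,
      hMx] at this
    simpa [sub_mul] using this
  exact (mul_eq_zero.1 hrow).resolve_left (sub_ne_zero.2 (hdiag i).symm)

end Matrix

section Hurwitz

variable {n : ℕ} {A : Matrix (Fin n) (Fin n) ℝ}

theorem IsHurwitz.exists_one_add_smul_nonneg (hA : IsHurwitz A) (hM : A.IsMetzler) :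
    ∃ t : ℝ, 0 < t ∧ (∀ i j, 0 ≤ (1 + t • A) i j) ∧
      ∀ μ ∈ spectrum ℂ ((1 + t • A).map Complex.ofReal), ‖μ‖ < 1 := by
  have hspec : ∀ᶠ t : ℝ in 𝓝[>] 0,
      ∀ μ ∈ spectrum ℂ (A.map Complex.ofReal), ‖1 + (t : ℂ) * μ‖ < 1 :=
    (finite_spectrum _).eventually_all.2 fun μ hμ => eventually_norm_one_add_mul_lt_one (hA μ hμ)
  have hdiag : ∀ᶠ t : ℝ in 𝓝 0, ∀ i, 0 ≤ 1 + t * A i i := eventually_all.2 fun i =>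
    (Continuous.tendsto (by fun_prop) 0).eventually_const_le (by simp)
  obtain ⟨t, ht, hdiag, hspec⟩ :=
    (eventually_mem_nhdsWithin.and ((hdiag.filter_mono nhdsWithin_le_nhds).and hspec)).exists
  refine ⟨t, ht, fun i j => ?_, ?_⟩
  · rcases eq_or_ne i j with rfl | hij
    · simpa using hdiag i
    · simpa [one_apply_ne hij] using mul_nonneg ht.le (hM i j hij)
  · have hmap : (1 + t • A).map Complex.ofReal =
        1 + Units.mk0 (t : ℂ) (mod_cast ht.ne') • A.map Complex.ofReal := by
      ext i j
      rcases eq_or_ne i j with rfl | hij <;> simp [one_apply_ne, Units.smul_def, *]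
    rw [hmap, spectrum_one_add_unit_smul]
    rintro _ ⟨μ, hμ, rfl⟩
    exact hspec μ hμ

theorem IsHurwitz.eq_zero_of_nonneg_of_mulVec_nonneg (hA : IsHurwitz A) (hM : A.IsMetzler)
    {v : Fin n → ℝ} (hv : 0 ≤ v) (hAv : 0 ≤ A *ᵥ v) : v = 0 := by
  obtain ⟨t, ht, hB, hspec⟩ := hA.exists_one_add_smul_nonneg hM
  have hBv : v ≤ (1 + t • A) *ᵥ v := by
    rw [add_mulVec, one_mulVec, smul_mulVec]
    exact le_add_of_nonneg_right (smul_nonneg ht.le hAv)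
  have hlim : Tendsto (fun k => (1 + t • A) ^ k *ᵥ v) atTop (𝓝 0) := by
    have := ((continuous_id.matrix_mulVec (continuous_const (y := v))).tendsto 0).comp
      (tendsto_pow_of_forall_norm_lt_one hspec)
    simpa [Function.comp_def] using this
  exact le_antisymm (ge_of_tendsto' hlim (le_pow_mulVec hB hBv)) hv

theorem IsHurwitz.exists_sum_neg (hA : IsHurwitz A) (hM : A.IsMetzler) {S : Finset (Fin n)}
    (hS : S.Nonempty) : ∃ m ∈ S, ∑ k ∈ S, A m k < 0 := by
  by_contra! h
  let v : Fin n → ℝ := fun j => if j ∈ S then 1 else 0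
  have hAv : 0 ≤ A *ᵥ v := fun m => by
    have hsum : (A *ᵥ v) m = ∑ k ∈ S, A m k := by
      simp [v, mulVec, dotProduct]
    rw [hsum]
    by_cases hm : m ∈ S
    · exact h m hm
    · exact Finset.sum_nonneg fun k hk => hM m k (ne_of_mem_of_not_mem hk hm).symm
  obtain ⟨i, hi⟩ := hS
  have := congrFun (hA.eq_zero_of_nonneg_of_mulVec_nonneg hM (fun j => by positivity) hAv) i
  simp [v, hi] at this

theorem IsHurwitz.diag_neg (hA : IsHurwitz A) (hM : A.IsMetzler) (i : Fin n) : A i i < 0 := by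
  simpa using hA.exists_sum_neg hM (Finset.singleton_nonempty i)

theorem IsHurwitz.not_transGen_offDiagAdj (hA : IsHurwitz A) (hM : A.IsMetzler)
    (hdom : ∀ i j, i ≠ j → A i j ≠ 0 → 0 ≤ A i i + A i j) (i : Fin n) :
    ¬TransGen A.offDiagAdj i i := by
  classical
  intro hcyc
  set S := Finset.univ.filter (TransGen A.offDiagAdj · i)
  obtain ⟨m, hm, hneg⟩ := hA.exists_sum_neg hM (S := S) ⟨i, by simpa [S] using hcyc⟩
  obtain ⟨k, hmk, hki⟩ := TransGen.head'_iff.1 (by simpa [S] using hm)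
  have hk : k ∈ S := by simpa [S] using TransGen.trans_right hki hcyc
  have hpair : A m m + A m k ≤ ∑ j ∈ S, A m j := by
    rw [← Finset.sum_pair hmk.1]
    refine Finset.sum_le_sum_of_subset_of_nonneg (by simp [Finset.insert_subset_iff, hm, hk])
      fun j _ hj => hM m j ?_
    rintro rfl
    simp at hj
  linarith [hdom m k hmk.1 hmk.2]

theorem isHurwitz_of_not_transGen_offDiagAdj {M : Matrix (Fin n) (Fin n) ℝ}
    (hdiag : ∀ i, M i i < 0) (hacyc : ∀ i, ¬TransGen M.offDiagAdj i i) : IsHurwitz M := by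
  intro μ hμ
  have hadj : (M.map Complex.ofReal).offDiagAdj = M.offDiagAdj := by
    funext i j
    simp [offDiagAdj]
  have hacyc' : ∀ i, ¬TransGen (M.map Complex.ofReal).offDiagAdj i i := by
    rwa [hadj]
  obtain ⟨i, rfl⟩ := exists_diag_eq_of_mem_spectrum hacyc' hμ
  simpa using hdiag i

end Hurwitz

/-- For a Metzler sign pattern `U` (entries in `{-1,0,1}`, off-diagonal entries
in `{0,1}`), every matrix in the qualitative class of `U` is Hurwitz stable iff
`U` itself is Hurwitz stable. -/
theorem sign_stable_iff_unit_hurwitz {n : ℕ} (U : Matrix (Fin n) (Fin n) ℝ)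
    (hentries : ∀ i j, U i j = -1 ∨ U i j = 0 ∨ U i j = 1)
    (hoffdiag : ∀ i j, i ≠ j → U i j = 0 ∨ U i j = 1) :
    (∀ M, InQualClass U M → IsHurwitz M) ↔ IsHurwitz U := by
  refine ⟨fun h => h U fun i j => ⟨fun h => by simp [h], fun h => by simp [h], id⟩,
    fun hU M hQ => ?_⟩
  have hM : U.IsMetzler := fun i j hij => by rcases hoffdiag i j hij with h | h <;> simp [h]
  have hdiag (i : Fin n) : U i i = -1 := by
    rcases hentries i i with h | h | h
    · exact h
    all_goals linarith [hU.diag_neg hM i]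
  have hacyc := hU.not_transGen_offDiagAdj hM fun i j hij hne => by
    rcases hoffdiag i j hij with h | h
    · exact absurd h hne
    · simp [hdiag, h]
  refine isHurwitz_of_not_transGen_offDiagAdj (fun i => (hQ i i).2.1 (hdiag i)) fun i hi =>
    hacyc i (TransGen.mono (fun a b hab => ⟨hab.1, mt (hQ a b).2.2 hab.2⟩) i i hi)
end

section
/- Let U ∈ {−1,0,1}^{n×n} be a Metzler sign-pattern. The sign-pattern is potentially stable (i.e., there exists at least one Hurwitz stable real matrix with this sign pattern) if and only if all diagonal entries of U equal −1. -/
open Matrix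

/-!
Sufficiency: with `-1` on the diagonal, `U - n • 1` lies in the qualitative class of `U` and is
strictly diagonally dominant with negative diagonal, hence Hurwitz by Gershgorin's theorem.

Necessity: let `M` be Metzler and Hurwitz. For small `c > 0` the matrix `N = 1 + c • M` is
entrywise nonnegative and its eigenvalues `1 + c μ` lie in the open unit disk, so `N ^ m → 0` by
Gelfand's formula. Nonnegativity gives `(N ^ m) i i ≥ (N i i) ^ m`, hence `N i i < 1`, i.e.
`M i i < 0`; for a sign pattern with entries in `{-1, 0, 1}` this forces `U i i = -1`.
-/

open Filter Topology

theorem tendsto_norm_pow_atTop_nhds_zero_of_spectralRadius_lt_one {A : Type*} [NormedRing A]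
    [NormedAlgebra ℂ A] [CompleteSpace A] {a : A} (ha : spectralRadius ℂ a < 1) :
    Tendsto (fun m : ℕ => ‖a ^ m‖) atTop (𝓝 0) := by
  obtain ⟨r, hρr, hr1⟩ := ENNReal.lt_iff_exists_nnreal_btwn.mp ha
  have hev : ∀ᶠ m : ℕ in atTop, (‖a ^ m‖₊ : ENNReal) ^ (1 / m : ℝ) < r :=
    (spectrum.pow_nnnorm_pow_one_div_tendsto_nhds_spectralRadius a).eventually_lt_const hρr
  refine squeeze_zero' (Eventually.of_forall fun _ => norm_nonneg _) ?_
    (tendsto_pow_atTop_nhds_zero_of_lt_one r.2 (by exact_mod_cast hr1))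
  filter_upwards [hev, eventually_ge_atTop 1] with m hm hm1
  have hm0 : (m : ℝ) ≠ 0 := by positivity
  have : (‖a ^ m‖₊ : ENNReal) < (r : ENNReal) ^ m :=
    calc (‖a ^ m‖₊ : ENNReal) = ((‖a ^ m‖₊ : ENNReal) ^ (1 / m : ℝ)) ^ m := by
          rw [← ENNReal.rpow_natCast, ← ENNReal.rpow_mul, one_div_mul_cancel hm0,
            ENNReal.rpow_one]
      _ < (r : ENNReal) ^ m := ENNReal.pow_lt_pow_left (by omega) hm
  exact_mod_cast this.le

theorem spectrum_one_add_smul {𝕜 A : Type*} [Field 𝕜] [Ring A] [Algebra 𝕜 A] {c : 𝕜}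
    (hc : c ≠ 0) (a : A) :
    spectrum 𝕜 (1 + c • a) = (fun z => 1 + c * z) '' spectrum 𝕜 a := by
  have h := spectrum.singleton_add_eq (c • a) (1 : 𝕜)
  rw [map_one] at h
  rw [← h, show c • a = (Units.mk0 c hc) • a from rfl, spectrum.unit_smul_eq_smul,
    Set.singleton_add, ← Set.image_smul, Set.image_image]
  rfl

namespace Complex

theorem norm_one_add_mul_lt_one {z : ℂ} {c : ℝ} (hc : 0 < c)
    (hcz : c * normSq z < -2 * z.re) : ‖1 + c * z‖ < 1 := by
  have key : normSq (1 + c * z) = 1 + c * (2 * z.re + c * normSq z) := by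
    simp [normSq_apply]; ring
  rw [← sq_lt_one_iff₀ (norm_nonneg _), Complex.sq_norm, key]
  nlinarith

theorem eventually_norm_one_add_mul_lt_one {z : ℂ} (hz : z.re < 0) :
    ∀ᶠ c : ℝ in 𝓝[>] 0, ‖1 + c * z‖ < 1 := by
  have hsmall : ∀ᶠ c : ℝ in 𝓝 0, c * normSq z < -2 * z.re :=
    ((continuous_id.mul continuous_const).tendsto' 0 0 (zero_mul _)).eventually_lt_const
      (by linarith)
  filter_upwards [nhdsWithin_le_nhds hsmall, self_mem_nhdsWithin] with c hc hpos
  exact norm_one_add_mul_lt_one hpos hc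

end Complex

namespace Matrix

section LinftyOp

attribute [local instance] Matrix.linftyOpSeminormedAddCommGroup

theorem nnnorm_apply_le_linfty_opNNNorm {m n α : Type*} [Fintype m] [Fintype n]
    [SeminormedAddCommGroup α] (A : Matrix m n α) (i : m) (j : n) :
    ‖A i j‖₊ ≤ ‖A‖₊ := by
  rw [linfty_opNNNorm_def]
  exact (Finset.single_le_sum (fun _ _ => zero_le) (Finset.mem_univ j)).trans
    (Finset.le_sup (f := fun i => ∑ j, ‖A i j‖₊) (Finset.mem_univ i))

end LinftyOp

variable {ι : Type*} [Fintype ι] [DecidableEq ι]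

theorem apply_self_pow_le_pow_apply_self {N : Matrix ι ι ℝ} (hN : ∀ a b, 0 ≤ N a b) (i : ι)
    (m : ℕ) : N i i ^ m ≤ (N ^ m) i i := by
  induction m with
  | zero => simp
  | succ m ih =>
    calc N i i ^ (m + 1) = N i i ^ m * N i i := pow_succ _ _
      _ ≤ (N ^ m) i i * N i i := mul_le_mul_of_nonneg_right ih (hN i i)
      _ ≤ ∑ j, (N ^ m) i j * N j i :=
        Finset.single_le_sum (f := fun j => (N ^ m) i j * N j i)
          (fun j _ => mul_nonneg (pow_apply_nonneg hN m i j) (hN j i)) (Finset.mem_univ i)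
      _ = (N ^ (m + 1)) i i := by rw [pow_succ, mul_apply]

attribute [local instance] Matrix.linftyOpNormedRing Matrix.linftyOpNormedAlgebra in
theorem apply_self_lt_one_of_forall_norm_lt_one {N : Matrix ι ι ℝ} (hN : ∀ a b, 0 ≤ N a b)
    (hN1 : ∀ z ∈ spectrum ℂ (N.map Complex.ofReal), ‖z‖ < 1) (i : ι) : N i i < 1 := by
  have : Nonempty ι := ⟨i⟩
  have hρ : spectralRadius ℂ (N.map Complex.ofReal) < 1 := by
    simpa using spectrum.spectralRadius_lt_of_forall_lt (N.map Complex.ofReal) (r := 1)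
      fun z hz => by exact_mod_cast hN1 z hz
  have hmap_pow (m : ℕ) : (N ^ m).map Complex.ofReal = (N.map Complex.ofReal) ^ m :=
    Matrix.map_pow N Complex.ofRealHom m
  by_contra! hi
  have hpow (m : ℕ) : 1 ≤ ‖(N.map Complex.ofReal) ^ m‖ :=
    calc (1 : ℝ) ≤ N i i ^ m := one_le_pow₀ hi
      _ ≤ (N ^ m) i i := apply_self_pow_le_pow_apply_self hN i m
      _ = ‖((N.map Complex.ofReal) ^ m) i i‖ := by
        rw [← hmap_pow, map_apply, Complex.norm_real,
          Real.norm_of_nonneg (pow_apply_nonneg hN m i i)]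
      _ ≤ ‖(N.map Complex.ofReal) ^ m‖ := nnnorm_apply_le_linfty_opNNNorm _ i i
  obtain ⟨m, hm⟩ := ((tendsto_norm_pow_atTop_nhds_zero_of_spectralRadius_lt_one hρ)
    |>.eventually_lt_const one_pos).exists
  exact (hpow m).not_gt hm

end Matrix

def Matrix.IsMetzler_s8 {ι : Type*} (M : Matrix ι ι ℝ) : Prop :=
  ∀ i j, i ≠ j → 0 ≤ M i j

theorem Matrix.IsMetzler_s8.apply_self_neg_of_isHurwitz {n : ℕ} {M : Matrix (Fin n) (Fin n) ℝ}
    (hM : M.IsMetzler_s8) (hH : IsHurwitz M) (i : Fin n) : M i i < 0 := by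
  obtain ⟨c, ⟨hdisk, hdiag⟩, hc⟩ : ∃ c : ℝ,
      ((∀ z ∈ spectrum ℂ (M.map Complex.ofReal), ‖1 + c * z‖ < 1) ∧
        ∀ a, 0 ≤ 1 + c * M a a) ∧ 0 < c := by
    refine (((eventually_all_finite (finite_spectrum _)).2 fun z hz =>
      Complex.eventually_norm_one_add_mul_lt_one (hH z hz)).and ?_).and
      self_mem_nhdsWithin |>.exists
    refine nhdsWithin_le_nhds (eventually_all.2 fun a => ?_)
    have h : Tendsto (fun c : ℝ => 1 + c * M a a) (𝓝 0) (𝓝 (1 + 0 * M a a)) :=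
      tendsto_const_nhds.add (tendsto_id.mul_const _)
    rw [zero_mul, add_zero] at h
    exact (h.eventually_const_lt zero_lt_one).mono fun _ => le_of_lt
  set N : Matrix (Fin n) (Fin n) ℝ := 1 + c • M
  have hN : ∀ a b, 0 ≤ N a b := by
    intro a b
    rcases eq_or_ne a b with rfl | hab
    · simpa [N] using hdiag a
    · simpa [N, hab] using mul_nonneg hc.le (hM a b hab)
  have hNdisk : ∀ z ∈ spectrum ℂ (N.map Complex.ofReal), ‖z‖ < 1 := by
    have hmap : N.map Complex.ofReal = 1 + (c : ℂ) • M.map Complex.ofReal := by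
      ext a b; by_cases hab : a = b <;> simp [N, hab]
    rw [hmap, spectrum_one_add_smul (Complex.ofReal_ne_zero.2 hc.ne')]
    rintro _ ⟨z, hz, rfl⟩
    exact hdisk z hz
  have hNii := apply_self_lt_one_of_forall_norm_lt_one hN hNdisk i
  simp only [N, add_apply, one_apply_eq, smul_apply, smul_eq_mul, add_lt_iff_neg_left]
    at hNii
  exact neg_of_mul_neg_right hNii hc.le

theorem isHurwitz_of_sum_abs_lt_neg_diag {n : ℕ} {M : Matrix (Fin n) (Fin n) ℝ}
    (hM : ∀ k, ∑ j ∈ Finset.univ.erase k, |M k j| < -M k k) : IsHurwitz M := by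
  intro μ hμ
  rw [← spectrum_toLin', ← Module.End.hasEigenvalue_iff_mem_spectrum] at hμ
  obtain ⟨k, hk⟩ := eigenvalue_mem_ball hμ
  have hdist : ‖μ - M k k‖ ≤ ∑ j ∈ Finset.univ.erase k, |M k j| := by
    simpa [Complex.dist_eq] using hk
  have hre : μ.re - M k k ≤ ‖μ - M k k‖ := by simpa using Complex.re_le_norm (μ - M k k)
  linarith [hM k]

theorem inQualClass_sub_smul_one {n : ℕ} {U : Matrix (Fin n) (Fin n) ℝ}
    (hdiag : ∀ i, U i i = -1) {t : ℝ} (ht : 0 ≤ t) : InQualClass U (U - t • 1) := by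
  intro a b
  rcases eq_or_ne a b with rfl | hab
  · simp only [Matrix.sub_apply, Matrix.smul_apply, one_apply_eq, hdiag a, smul_eq_mul, mul_one]
    exact ⟨fun h => by norm_num at h, fun _ => by linarith, fun h => by norm_num at h⟩
  · simp only [Matrix.sub_apply, Matrix.smul_apply, one_apply_ne hab, smul_zero, sub_zero]
    exact ⟨fun h => h ▸ one_pos, fun h => h ▸ neg_one_lt_zero, id⟩

/-- A Metzler sign pattern is potentially stable (its qualitative class contains
some Hurwitz stable matrix) iff all of its diagonal entries equal `-1`. -/
theorem potentially_stable_iff_diag_neg {n : ℕ} (U : Matrix (Fin n) (Fin n) ℝ)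
    (hentries : ∀ i j, U i j = -1 ∨ U i j = 0 ∨ U i j = 1)
    (hoffdiag : ∀ i j, i ≠ j → U i j = 0 ∨ U i j = 1) :
    (∃ M, InQualClass U M ∧ IsHurwitz M) ↔ (∀ i, U i i = -1) := by
  constructor
  · rintro ⟨M, hQ, hH⟩ i
    have hM : M.IsMetzler_s8 := fun a b hab =>
      (hoffdiag a b hab).elim (fun h => ((hQ a b).2.2 h).ge) fun h => ((hQ a b).1 h).le
    have hMii := hM.apply_self_neg_of_isHurwitz hH i
    rcases hentries i i with h | h | h
    · exact h
    · exact absurd ((hQ i i).2.2 h) hMii.ne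
    · exact absurd ((hQ i i).1 h) hMii.not_gt
  · intro hdiag
    refine ⟨U - (n : ℝ) • 1, inQualClass_sub_smul_one hdiag n.cast_nonneg,
      isHurwitz_of_sum_abs_lt_neg_diag fun k => ?_⟩
    calc ∑ j ∈ Finset.univ.erase k, |(U - (n : ℝ) • 1) k j|
        = ∑ j ∈ Finset.univ.erase k, |U k j| :=
          Finset.sum_congr rfl fun j hj => by
            simp [one_apply_ne (Finset.ne_of_mem_erase hj).symm]
      _ ≤ ∑ j ∈ Finset.univ.erase k, 1 :=
          Finset.sum_le_sum fun j _ =>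
            abs_le.2 (by rcases hentries k j with h | h | h <;> simp [h])
      _ ≤ n := by simp
      _ < -(U - (n : ℝ) • 1) k k := by simp [hdiag k]
end
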